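/- arXiv:1312.0849 — 5 statements merged into one kernel-verified Lean document; each statement's English description precedes it below -/
import Mathlib

section
/- In ℂ⁴ ≅ ℍ², if v, vj, w, wj are linearly dependent over ℂ (where v, w ≠ 0), then the quaternionic lines vℍ and wℍ coincide. -/
noncomputable section
open ExteriorAlgebra

open ExteriorAlgebra

/-- The quaternions. -/
abbrev H := Quaternion ℝ

/-- ℂ⁴ -/
abbrev V4 := Fin 4 → ℂ

/-- Embedding ℂ → ℍ as the span of 1, i. -/
def cq (z : ℂ) : H := ⟨z.re, z.im, 0, 0⟩

/-- The quaternion j. -/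
def qj : H := ⟨0, 0, 1, 0⟩

/-- The quaternion i. -/
def qi : H := ⟨0, 1, 0, 0⟩

/-- The (1,i)-part of a quaternion q = z + j·w, z,w ∈ ℂ. -/
def partC (q : H) : ℂ := ⟨q.re, q.imI⟩

/-- The (j,k)-part of a quaternion q = z + j·w, z,w ∈ ℂ. -/
def partJ (q : H) : ℂ := ⟨q.imJ, -q.imK⟩

/-- The identification ℂ⁴ ≅ ℍ² coming from the complex structure of right
multiplication by i: (z₁,z₂,z₃,z₄) ↦ (z₁ + j z₂, z₃ + j z₄). -/
def c4 (v : V4) : Fin 2 → H := ![cq (v 0) + qj * cq (v 1), cq (v 2) + qj * cq (v 3)]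

/-- Inverse of the identification ℂ⁴ ≅ ℍ². -/
def h2c4 (x : Fin 2 → H) : V4 := ![partC (x 0), partJ (x 0), partC (x 1), partJ (x 1)]

/-- Right scalar multiplication on ℍ². -/
def smulH (x : Fin 2 → H) (l : H) : Fin 2 → H := fun i => x i * l

/-- The indefinite quaternionic Hermitian form ⟨v,w⟩ = v̄₁w₁ - v̄₂w₂ on ℍ². -/
def hermH (x y : Fin 2 → H) : H := star (x 0) * y 0 - star (x 1) * y 1

/-- The complex Hermitian form of signature (2,2) on ℂ⁴. -/
def hermC (v w : V4) : ℂ :=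
  (starRingEnd ℂ) (v 0) * w 0 + (starRingEnd ℂ) (v 1) * w 1
    - (starRingEnd ℂ) (v 2) * w 2 - (starRingEnd ℂ) (v 3) * w 3

/-- The conjugate linear map J : ℂ⁴ → ℂ⁴ given by right multiplication with j on ℍ² ≅ ℂ⁴. -/
def Jq (v : V4) : V4 :=
  ![-(starRingEnd ℂ) (v 1), (starRingEnd ℂ) (v 0), -(starRingEnd ℂ) (v 3), (starRingEnd ℂ) (v 2)]


lemma Jq_add (u v : V4) : Jq (u + v) = Jq u + Jq v := by
  funext i
  fin_cases i <;> simp [Jq, map_add] <;> ring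

lemma Jq_smul (c : ℂ) (v : V4) : Jq (c • v) = (starRingEnd ℂ c) • Jq v := by
  funext i
  fin_cases i <;> simp [Jq, map_add] <;> ring

lemma Jq_Jq (v : V4) : Jq (Jq v) = -v := by
  funext i
  fin_cases i <;> simp [Jq]

lemma pair_indep (v : V4) (hv : v ≠ 0) : LinearIndependent ℂ ![v, Jq v] := by
  rw [LinearIndependent.pair_iff]
  intro a b hab
  have hJ : (starRingEnd ℂ a) • Jq v - (starRingEnd ℂ b) • v = 0 := by
    have := congrArg Jq hab
    rw [Jq_add, Jq_smul, Jq_smul, Jq_Jq] at this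
    simpa [smul_neg, sub_eq_add_neg, show Jq 0 = 0 from by funext i; fin_cases i <;> simp [Jq]] using this
  have key : ((starRingEnd ℂ a) * a + (starRingEnd ℂ b) * b) • v = 0 := by
    have h1 := congrArg (fun x => (starRingEnd ℂ a) • x) hab
    have h2 := congrArg (fun x => b • x) hJ
    simp only [smul_add, smul_sub, smul_smul, smul_zero] at h1 h2
    have := congrArg₂ (· - ·) h1 h2
    simp only [sub_zero] at this
    rw [← this, add_smul]
    module
  have hc : (starRingEnd ℂ a) * a + (starRingEnd ℂ b) * b = 0 := by
    by_contra hne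
    exact hv (by simpa [hne] using smul_eq_zero.mp key)
  have hr : Complex.normSq a + Complex.normSq b = 0 := by
    have : ((Complex.normSq a + Complex.normSq b : ℝ) : ℂ) = 0 := by
      push_cast
      rw [Complex.normSq_eq_conj_mul_self, Complex.normSq_eq_conj_mul_self]
      exact hc
    exact_mod_cast this
  have ha : Complex.normSq a = 0 := by nlinarith [Complex.normSq_nonneg a, Complex.normSq_nonneg b]
  have hb : Complex.normSq b = 0 := by nlinarith [Complex.normSq_nonneg a, Complex.normSq_nonneg b]
  exact ⟨Complex.normSq_eq_zero.mp ha, Complex.normSq_eq_zero.mp hb⟩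

lemma Jq_mem_span (v u : V4) (h : u ∈ Submodule.span ℂ {v, Jq v}) :
    Jq u ∈ Submodule.span ℂ {v, Jq v} := by
  rw [Submodule.mem_span_pair] at h ⊢
  obtain ⟨a, b, rfl⟩ := h
  refine ⟨-(starRingEnd ℂ b), starRingEnd ℂ a, ?_⟩
  rw [Jq_add, Jq_smul, Jq_smul, Jq_Jq]
  module

lemma span_pair_eq_of_le (x u : V4) (hx : LinearIndependent ℂ ![x, Jq x])
    (hu : LinearIndependent ℂ ![u, Jq u])
    (h1 : u ∈ Submodule.span ℂ {x, Jq x}) :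
    Submodule.span ℂ {u, Jq u} = Submodule.span ℂ {x, Jq x} := by
  have h2 := Jq_mem_span x u h1
  have hle : Submodule.span ℂ {u, Jq u} ≤ Submodule.span ℂ {x, Jq x} := by
    rw [Submodule.span_le, Set.insert_subset_iff, Set.singleton_subset_iff]
    exact ⟨h1, h2⟩
  have hrange : ∀ z : V4, Set.range ![z, Jq z] = {z, Jq z} := by
    intro z; simp [Matrix.range_cons, Matrix.range_empty, Set.pair_comm]
  have frank : ∀ z : V4, LinearIndependent ℂ ![z, Jq z] →
      Module.finrank ℂ (Submodule.span ℂ ({z, Jq z} : Set V4)) = 2 := by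
    intro z hz
    rw [← hrange z, finrank_span_eq_card hz]
    simp
  exact Submodule.eq_of_le_of_finrank_eq hle (by rw [frank u hu, frank x hx])

/-- If v, vj, w, wj are linearly dependent over ℂ in ℂ⁴ ≅ ℍ² (v, w ≠ 0), then
the quaternionic lines vℍ = Span(v,vj) and wℍ = Span(w,wj) coincide. -/
theorem stmt8 (v w : V4) (hv : v ≠ 0) (hw : w ≠ 0)
    (hdep : ¬ LinearIndependent ℂ ![v, Jq v, w, Jq w]) :
    Submodule.span ℂ {v, Jq v} = Submodule.span ℂ {w, Jq w} := by
  rw [Fintype.not_linearIndependent_iff] at hdep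
  obtain ⟨g, hsum, i0, hi0⟩ := hdep
  rw [Fin.sum_univ_four] at hsum
  simp only [Matrix.cons_val_zero, Matrix.cons_val_one, Matrix.head_cons,
    Matrix.cons_val_two, Matrix.tail_cons, Matrix.cons_val_three] at hsum
  set u : V4 := g 0 • v + g 1 • Jq v with hu_def
  have hu2 : u = -(g 2 • w + g 3 • Jq w) := by
    rw [eq_neg_iff_add_eq_zero, ← add_assoc]; exact hsum
  have hvi := pair_indep v hv
  have hwi := pair_indep w hw
  have hune : u ≠ 0 := by
    intro h0
    have hvz := (LinearIndependent.pair_iff.mp hvi) (g 0) (g 1) (by rw [← hu_def, h0])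
    have hwz := (LinearIndependent.pair_iff.mp hwi) (g 2) (g 3) (by
      have : g 2 • w + g 3 • Jq w = 0 := by
        have := hu2; rw [h0] at this
        exact neg_eq_zero.mp this.symm
      exact this)
    fin_cases i0 <;> simp_all
  have hui := pair_indep u hune
  have huv : u ∈ Submodule.span ℂ {v, Jq v} :=
    Submodule.mem_span_pair.mpr ⟨g 0, g 1, hu_def.symm⟩
  have huw : u ∈ Submodule.span ℂ {w, Jq w} := by
    rw [Submodule.mem_span_pair]
    exact ⟨-g 2, -g 3, by rw [hu2]; module⟩
  rw [← span_pair_eq_of_le v u hvi hui huv, ← span_pair_eq_of_le w u hwi hui huw]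
end
end

section
/- For x ∈ S³ ⊂ ℍ (unit quaternions, embedded in ℍP¹ as [x:1]) and a unit imaginary quaternion μ ∈ Im ℍ, the set e = {(x,1)λ : λ ∈ ℍ, μλ = λi} is a complex line in ℂ⁴ (a 1-dimensional complex subspace of the quaternionic line [(x,1)]ℍ), and e lies in the quadric Q of isotropic lines of the signature-(2,2) Hermitian form. -/
noncomputable section
open ExteriorAlgebra

open ExteriorAlgebra

@[simp] lemma cq_re (z : ℂ) : (cq z).re = z.re := rfl
@[simp] lemma cq_imI (z : ℂ) : (cq z).imI = z.im := rfl
@[simp] lemma cq_imJ (z : ℂ) : (cq z).imJ = 0 := rfl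
@[simp] lemma cq_imK (z : ℂ) : (cq z).imK = 0 := rfl
@[simp] lemma qi_re : qi.re = 0 := rfl
@[simp] lemma qi_imI : qi.imI = 1 := rfl
@[simp] lemma qi_imJ : qi.imJ = 0 := rfl
@[simp] lemma qi_imK : qi.imK = 0 := rfl
@[simp] lemma qj_re : qj.re = 0 := rfl
@[simp] lemma qj_imI : qj.imI = 0 := rfl
@[simp] lemma qj_imJ : qj.imJ = 1 := rfl
@[simp] lemma qj_imK : qj.imK = 0 := rfl

/- Auxiliary lemmas -/

lemma c4_h2c4 (y : Fin 2 → H) : c4 (h2c4 y) = y := by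
  funext i; fin_cases i <;>
  · ext <;> simp [c4, h2c4, cq_re, cq_imI, cq_imJ, cq_imK, qj_re, qj_imI, qj_imJ, qj_imK, partC, partJ, Quaternion.re_mul, Quaternion.imI_mul,
      Quaternion.imJ_mul, Quaternion.imK_mul]

lemma h2c4_c4 (v : V4) : h2c4 (c4 v) = v := by
  funext i; fin_cases i <;>
  · apply Complex.ext <;> simp [c4, h2c4, cq_re, cq_imI, cq_imJ, cq_imK, qj_re, qj_imI, qj_imJ, qj_imK, partC, partJ, Quaternion.re_mul,
      Quaternion.imI_mul, Quaternion.imJ_mul, Quaternion.imK_mul]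

lemma c4_smul (z : ℂ) (v : V4) : c4 (z • v) = fun i => c4 v i * cq z := by
  funext i; fin_cases i <;>
  · ext <;> simp [c4, cq_re, cq_imI, cq_imJ, cq_imK, qj_re, qj_imI, qj_imJ, qj_imK, Quaternion.re_mul, Quaternion.imI_mul,
      Quaternion.imJ_mul, Quaternion.imK_mul, Complex.mul_re, Complex.mul_im] <;> ring

lemma cq_qi_comm (z : ℂ) : qi * cq z = cq z * qi := by
  ext <;> simp [cq_re, cq_imI, cq_imJ, cq_imK, qi_re, qi_imI, qi_imJ, qi_imK, Quaternion.re_mul, Quaternion.imI_mul, Quaternion.imJ_mul,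
    Quaternion.imK_mul]

lemma hermC_self (v : V4) : hermC v v = partC (hermH (c4 v) (c4 v)) := by
  apply Complex.ext <;>
  · simp [hermC, hermH, c4, cq_re, cq_imI, cq_imJ, cq_imK, qj_re, qj_imI, qj_imJ, qj_imK, partC, Quaternion.re_mul, Quaternion.imI_mul,
      Complex.mul_re, Complex.mul_im, Quaternion.re_star, Quaternion.imI_star,
      Quaternion.imJ_star, Quaternion.imK_star, Complex.add_re, Complex.add_im,
      Complex.sub_re, Complex.sub_im] <;> ring

/-- For a unit quaternion x ∈ S³ ⊂ ℍ (embedded in ℍP¹ as [x:1]) and a unit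
imaginary quaternion μ, the set e = {(x,1)λ : λ ∈ ℍ, μλ = λi} is a complex line
in ℂ⁴ (a 1-dimensional complex subspace of the quaternionic line [(x,1)]ℍ), and
e lies in the quadric Q of isotropic lines of the signature-(2,2) Hermitian
form. -/
theorem stmt10 (x : H) (hx : Quaternion.normSq x = 1)
    (μ : H) (hμre : μ.re = 0) (hμ : Quaternion.normSq μ = 1) :
    ∃ S : Submodule ℂ V4,
      (S : Set V4) = {v : V4 | ∃ l : H, μ * l = l * qi ∧ c4 v = smulH ![x, 1] l} ∧
      Module.finrank ℂ S = 1 ∧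
      ∀ v ∈ S, hermC v v = 0 := by
  have hμ' : μ.imI ^ 2 + μ.imJ ^ 2 + μ.imK ^ 2 = 1 := by
    have := hμ; rw [Quaternion.normSq_def'] at this; rw [hμre] at this; linarith [this]
  -- choose a generator l₀ of the line {l | μ l = l i}
  obtain ⟨l₀, hl₀μ, hl₀ne, hl₀key⟩ :
      ∃ l₀ : H, μ * l₀ = l₀ * qi ∧ l₀ ≠ 0 ∧
        ∀ l : H, μ * l = l * qi → ∃ z : ℂ, l = l₀ * cq z := by
    by_cases hcase : μ.imI = -1
    · -- μ = -i : take l₀ = j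
      have hb : μ.imJ = 0 := by nlinarith [sq_nonneg μ.imJ, sq_nonneg μ.imK]
      have hc : μ.imK = 0 := by nlinarith [sq_nonneg μ.imJ, sq_nonneg μ.imK]
      refine ⟨qj, ?_, ?_, ?_⟩
      · ext <;> simp [qj_re, qj_imI, qj_imJ, qj_imK, qi_re, qi_imI, qi_imJ, qi_imK, Quaternion.re_mul, Quaternion.imI_mul, Quaternion.imJ_mul,
          Quaternion.imK_mul, hμre, hcase, hb, hc]
      · intro h; have := congrArg QuaternionAlgebra.imJ h; simp [qj_re, qj_imI, qj_imJ, qj_imK, Quaternion.imJ_zero] at this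
      · intro l hl
        have h1 := congrArg QuaternionAlgebra.re hl
        have h2 := congrArg QuaternionAlgebra.imI hl
        simp only [Quaternion.re_mul, Quaternion.imI_mul, qi_re, qi_imI, qi_imJ, qi_imK, hμre, hcase, hb, hc] at h1 h2
        refine ⟨⟨l.imJ, -l.imK⟩, ?_⟩
        ext <;> simp [qj_re, qj_imI, qj_imJ, qj_imK, cq_re, cq_imI, cq_imJ, cq_imK, Quaternion.re_mul, Quaternion.imI_mul, Quaternion.imJ_mul,
          Quaternion.imK_mul] <;> linarith
    · -- generic case: take l₀ = 1 - μ i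
      have ha : 1 + μ.imI ≠ 0 := fun h => hcase (by linarith)
      refine ⟨1 - μ * qi, ?_, ?_, ?_⟩
      · ext <;> simp [qi_re, qi_imI, qi_imJ, qi_imK, Quaternion.re_mul, Quaternion.imI_mul, Quaternion.imJ_mul,
          Quaternion.imK_mul, hμre, Quaternion.re_one, Quaternion.imI_one, Quaternion.imJ_one, Quaternion.imK_one]
        · ring
        · linear_combination hμ'
        · ring
        · ring
      · intro h
        have := congrArg QuaternionAlgebra.re h
        simp [qi_re, qi_imI, qi_imJ, qi_imK, Quaternion.re_mul, hμre, Quaternion.re_one, Quaternion.re_zero] at this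
        exact ha (by linarith)
      · intro l hl
        have h3 := congrArg QuaternionAlgebra.imJ hl
        have h4 := congrArg QuaternionAlgebra.imK hl
        simp only [Quaternion.imJ_mul, Quaternion.imK_mul, qi_re, qi_imI, qi_imJ, qi_imK, hμre] at h3 h4
        have h3' : μ.imJ * l.re + μ.imK * l.imI = (1 + μ.imI) * l.imK := by
          linear_combination h3
        have h4' : (1 + μ.imI) * l.imJ = μ.imJ * l.imI - μ.imK * l.re := by
          linear_combination h4
        refine ⟨⟨l.re / (1 + μ.imI), l.imI / (1 + μ.imI)⟩, ?_⟩
        refine QuaternionAlgebra.ext ?_ ?_ ?_ ?_ <;>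
          simp [cq_re, cq_imI, cq_imJ, cq_imK, qi_re, qi_imI, qi_imJ, qi_imK, Quaternion.re_mul, Quaternion.imI_mul, Quaternion.imJ_mul,
            Quaternion.imK_mul, hμre, Quaternion.re_one, Quaternion.imI_one, Quaternion.imJ_one, Quaternion.imK_one]
        · field_simp
        · field_simp
        · field_simp
          linear_combination h4'
        · field_simp
          linear_combination -h3'
  set w₀ : V4 := h2c4 (smulH ![x, 1] l₀) with hw₀def
  have hc4w₀ : c4 w₀ = smulH ![x, 1] l₀ := c4_h2c4 _
  have hw₀ne : w₀ ≠ 0 := by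
    intro h
    apply hl₀ne
    have h2 := congrFun h 2
    have h3 := congrFun h 3
    simp only [hw₀def, h2c4, smulH] at h2 h3
    simp only [Matrix.cons_val_one, Matrix.head_cons, one_mul, Matrix.cons_val] at h2 h3
    norm_num [partC, partJ, Complex.ext_iff] at h2 h3
    apply Quaternion.ext <;> simp [h2.1, h2.2, h3.1, h3.2, Quaternion.re_zero, Quaternion.imI_zero, Quaternion.imJ_zero, Quaternion.imK_zero]
  refine ⟨Submodule.span ℂ {w₀}, ?_, ?_, ?_⟩
  · ext v
    simp only [SetLike.mem_coe, Submodule.mem_span_singleton, Set.mem_setOf_eq]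
    constructor
    · rintro ⟨z, rfl⟩
      refine ⟨l₀ * cq z, ?_, ?_⟩
      · rw [← mul_assoc, hl₀μ, mul_assoc, mul_assoc, cq_qi_comm]
      · rw [c4_smul, hc4w₀]; funext i; simp [smulH, mul_assoc]
    · rintro ⟨l, hl, hcl⟩
      obtain ⟨z, rfl⟩ := hl₀key l hl
      refine ⟨z, ?_⟩
      have : c4 (z • w₀) = c4 v := by
        rw [c4_smul, hc4w₀, hcl]; funext i; simp [smulH, mul_assoc]
      calc z • w₀ = h2c4 (c4 (z • w₀)) := (h2c4_c4 _).symm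
        _ = h2c4 (c4 v) := by rw [this]
        _ = v := h2c4_c4 v
  · exact finrank_span_singleton hw₀ne
  · intro v hv
    rw [Submodule.mem_span_singleton] at hv
    obtain ⟨z, rfl⟩ := hv
    rw [hermC_self]
    have hherm : hermH (c4 (z • w₀)) (c4 (z • w₀)) = 0 := by
      rw [c4_smul, hc4w₀]
      have hx1 : star x * x = 1 := by
        rw [Quaternion.star_mul_self, hx]; exact_mod_cast rfl
      simp only [hermH, smulH, Matrix.cons_val_zero, Matrix.cons_val_one, Matrix.head_cons,
        one_mul, star_mul]
      have e1 : star (cq z) * (star l₀ * star x) * (x * l₀ * cq z)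
          = star (cq z) * star l₀ * (star x * x) * (l₀ * cq z) := by noncomm_ring
      rw [e1, hx1, mul_one, sub_self]
    rw [hherm]
    simp [partC, Complex.ext_iff, Quaternion.re_zero, Quaternion.imI_zero]
end
end

section
/- The plane A = {[z] ∈ ℂP³ : z₄ = 0} intersects the quadric Q = {[z] : |z₁|² + |z₂|² = |z₃|² + |z₄|²} in the set {[z₁ : z₂ : 1 : 0] : |z₁|² + |z₂|² = 1}, and this intersection meets each twistor fiber Q ∩ π⁻¹(p), p ∈ S³, in exactly one point. -/
noncomputable section
open ExteriorAlgebra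

open ExteriorAlgebra

lemma cq_mul (a b : ℂ) : cq (a * b) = cq a * cq b := by
  apply Quaternion.ext <;>
    simp [Complex.mul_re, Complex.mul_im, Quaternion.re_mul, Quaternion.imI_mul,
      Quaternion.imJ_mul, Quaternion.imK_mul]

lemma key_mul (q : H) (z : ℂ) :
    q * cq z = cq (partC q * z) + qj * cq (partJ q * z) := by
  apply Quaternion.ext <;>
    (simp [partC, partJ, Complex.mul_re, Complex.mul_im, Quaternion.re_mul,
      Quaternion.imI_mul, Quaternion.imJ_mul, Quaternion.imK_mul]; try ring)

lemma partC_mix (a b : ℂ) : partC (cq a + qj * cq b) = a := by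
  apply Complex.ext <;>
    simp [partC, Quaternion.re_mul, Quaternion.imI_mul]

lemma partJ_mix (a b : ℂ) : partJ (cq a + qj * cq b) = b := by
  apply Complex.ext <;>
    simp [partJ, Quaternion.imJ_mul, Quaternion.imK_mul]

lemma part_normSq (q : H) :
    Complex.normSq (partC q) + Complex.normSq (partJ q) = Quaternion.normSq q := by
  simp [partC, partJ, Complex.normSq_apply, Quaternion.normSq_def']
  ring

lemma cq_one : cq 1 = 1 := by apply Quaternion.ext <;> simp [Quaternion.re_one, Quaternion.imI_one, Quaternion.imJ_one, Quaternion.imK_one]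
lemma cq_zero : cq 0 = 0 := by apply Quaternion.ext <;> simp [Quaternion.re_zero, Quaternion.imI_zero, Quaternion.imJ_zero, Quaternion.imK_zero]

lemma hermC_smul (c z1 z2 : ℂ) (h : Complex.normSq z1 + Complex.normSq z2 = 1) :
    hermC (c • ![z1,z2,1,0]) (c • ![z1,z2,1,0]) = 0 := by
  have hzz : (starRingEnd ℂ) z1 * z1 + (starRingEnd ℂ) z2 * z2 = 1 := by
    rw [mul_comm _ z1, mul_comm _ z2, Complex.mul_conj, Complex.mul_conj]
    exact_mod_cast h
  simp only [hermC, Pi.smul_apply, smul_eq_mul, Matrix.cons_val_zero, Matrix.cons_val_one,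
    Matrix.head_cons, Matrix.cons_val_two, Matrix.tail_cons, Matrix.cons_val_three, map_mul,
    map_one, map_zero, mul_zero, mul_one]
  linear_combination ((starRingEnd ℂ) c * c) * hzz


/-- The plane A = {z₄ = 0} ⊂ ℂP³ intersects the quadric Q in
{[z₁ : z₂ : 1 : 0] : |z₁|² + |z₂|² = 1}, and this intersection meets each
twistor fiber over a point p ∈ S³ (an isotropic quaternionic line) in exactly
one point. -/
theorem stmt11 :
    ({v : V4 | v ≠ 0 ∧ v 3 = 0 ∧ hermC v v = 0} =
      {v : V4 | ∃ z1 z2 c : ℂ, c ≠ 0 ∧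
        ‖z1‖ ^ 2 + ‖z2‖ ^ 2 = 1 ∧ v = c • ![z1, z2, 1, 0]}) ∧
    ∀ y : Fin 2 → H, y ≠ 0 → hermH y y = 0 →
      ∃! L : Submodule ℂ V4, Module.finrank ℂ L = 1 ∧
        (∀ v ∈ L, ∃ l : H, c4 v = smulH y l) ∧
        (∀ v ∈ L, v 3 = 0 ∧ hermC v v = 0) := by
  constructor
  · ext v
    simp only [Set.mem_setOf_eq]
    constructor
    · rintro ⟨hv, h3, hq⟩
      have hns : Complex.normSq (v 0) + Complex.normSq (v 1) = Complex.normSq (v 2) := by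
        simp only [hermC, h3, map_zero, mul_zero, sub_zero] at hq
        have : (↑(Complex.normSq (v 0)) + ↑(Complex.normSq (v 1)) : ℂ)
            = ↑(Complex.normSq (v 2)) := by
          rw [← Complex.mul_conj, ← Complex.mul_conj, ← Complex.mul_conj]
          linear_combination hq
        exact_mod_cast this
      have h2 : v 2 ≠ 0 := by
        intro h2
        apply hv
        rw [h2, map_zero] at hns
        have h0 : v 0 = 0 := Complex.normSq_eq_zero.mp (by nlinarith [Complex.normSq_nonneg (v 0), Complex.normSq_nonneg (v 1)])
        have h1 : v 1 = 0 := Complex.normSq_eq_zero.mp (by nlinarith [Complex.normSq_nonneg (v 0), Complex.normSq_nonneg (v 1)])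
        funext i; fin_cases i <;> simp [h0, h1, h2, h3]
      have hns2 : Complex.normSq (v 2) ≠ 0 := fun h => h2 (Complex.normSq_eq_zero.mp h)
      refine ⟨v 0 / v 2, v 1 / v 2, v 2, h2, ?_, ?_⟩
      · rw [Complex.sq_norm, Complex.sq_norm, Complex.normSq_div, Complex.normSq_div]
        field_simp
        linarith
      · funext i; fin_cases i <;> simp [h3] <;> field_simp
    · rintro ⟨z1, z2, c, hc, habs, rfl⟩
      refine ⟨?_, by simp, hermC_smul c z1 z2
        (by rw [← Complex.sq_norm, ← Complex.sq_norm]; exact habs)⟩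
      intro h
      apply hc
      have := congrFun h 2
      simpa using this
  · intro y hy h0
    have hsq : Quaternion.normSq (y 0) = Quaternion.normSq (y 1) := by
      have h : star (y 0) * y 0 = star (y 1) * y 1 := by
        have := sub_eq_zero.mp (show star (y 0) * y 0 - star (y 1) * y 1 = 0 from h0)
        exact this
      rw [Quaternion.star_mul_self, Quaternion.star_mul_self] at h
      exact Quaternion.coe_injective h
    have hy1 : y 1 ≠ 0 := by
      intro h1
      apply hy
      have h0' : y 0 = 0 := by
        apply Quaternion.normSq_eq_zero.mp
        rw [hsq, h1, map_zero]
      funext i; fin_cases i <;> simp [h0', h1]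
    set w : H := y 0 * (y 1)⁻¹ with hw
    have hwns : Quaternion.normSq w = 1 := by
      have hne : Quaternion.normSq (y 1) ≠ 0 := fun h => hy1 (Quaternion.normSq_eq_zero.mp h)
      have h : Quaternion.normSq w * Quaternion.normSq (y 1) = 1 * Quaternion.normSq (y 1) := by
        rw [← map_mul, hw, inv_mul_cancel_right₀ hy1, one_mul, hsq]
      exact mul_right_cancel₀ hne h
    set α := partC w with hα
    set β := partJ w with hβ
    set v₀ : V4 := ![α, β, 1, 0] with hv₀
    have habs : Complex.normSq α + Complex.normSq β = 1 := by
      rw [hα, hβ, part_normSq]; exact hwns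
    have hv₀ne : v₀ ≠ 0 := by
      intro h
      have := congrFun h 2
      simp [hv₀] at this
    have hc4 : ∀ c : ℂ, c4 (c • v₀) = smulH y ((y 1)⁻¹ * cq c) := by
      intro c
      funext i
      fin_cases i
      · show cq ((c • v₀) 0) + qj * cq ((c • v₀) 1) = y 0 * ((y 1)⁻¹ * cq c)
        rw [← mul_assoc, ← hw]
        conv_rhs => rw [key_mul]
        simp only [Pi.smul_apply, smul_eq_mul, hv₀, Matrix.cons_val_zero, Matrix.cons_val_one,
          Matrix.head_cons, ← hα, ← hβ, mul_comm c]
      · show cq ((c • v₀) 2) + qj * cq ((c • v₀) 3) = y 1 * ((y 1)⁻¹ * cq c)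
        rw [← mul_assoc, mul_inv_cancel₀ hy1, one_mul]
        simp [hv₀, cq_zero]
    refine ⟨Submodule.span ℂ {v₀}, ⟨finrank_span_singleton hv₀ne, ?_, ?_⟩, ?_⟩
    · intro v hv
      obtain ⟨c, rfl⟩ := Submodule.mem_span_singleton.mp hv
      exact ⟨(y 1)⁻¹ * cq c, hc4 c⟩
    · intro v hv
      obtain ⟨c, rfl⟩ := Submodule.mem_span_singleton.mp hv
      constructor
      · simp [hv₀]
      · exact hermC_smul c α β habs
    · rintro L' ⟨hr, hfib, hA⟩
      have hbot : L' ≠ ⊥ := by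
        intro h; rw [h, finrank_bot] at hr; exact one_ne_zero hr.symm
      obtain ⟨v, hvL, hvne⟩ := (Submodule.ne_bot_iff L').mp hbot
      obtain ⟨l, hl⟩ := hfib v hvL
      obtain ⟨h3, -⟩ := hA v hvL
      have hl1 : cq (v 2) = y 1 * l := by
        have h := congrFun hl 1
        show cq (v 2) = smulH y l 1
        rw [← h]
        show cq (v 2) = cq (v 2) + qj * cq (v 3)
        rw [h3, cq_zero, mul_zero, add_zero]
      have hlv : l = (y 1)⁻¹ * cq (v 2) := by
        rw [hl1, ← mul_assoc, inv_mul_cancel₀ hy1, one_mul]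
      have hl0 : cq (v 0) + qj * cq (v 1) = cq (α * v 2) + qj * cq (β * v 2) := by
        have h := congrFun hl 0
        show c4 v 0 = _
        rw [h]
        show y 0 * l = _
        rw [hlv, ← mul_assoc, ← hw, key_mul]
      have e0 : v 0 = α * v 2 := by
        have := congrArg partC hl0; rwa [partC_mix, partC_mix] at this
      have e1 : v 1 = β * v 2 := by
        have := congrArg partJ hl0; rwa [partJ_mix, partJ_mix] at this
      have h2 : v 2 ≠ 0 := by
        intro h2; apply hvne; funext i; fin_cases i <;> simp [e0, e1, h2, h3]
      have hveq : v = v 2 • v₀ := by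
        funext i; fin_cases i <;> simp [e0, e1, h3, hv₀, mul_comm]
      have hspan : Submodule.span ℂ {v} = L' :=
        Submodule.eq_of_le_of_finrank_eq
          ((Submodule.span_singleton_le_iff_mem v L').mpr hvL)
          (by rw [finrank_span_singleton hvne, hr])
      rw [← hspan, hveq, Submodule.span_singleton_smul_eq (isUnit_iff_ne_zero.mpr h2)]
end
end

section
/- Let W ≅ ℂ⁵ with ℂ-bilinear form (,) = -e₀*⊗e₀* + Σᵢ₌₁⁴ eᵢ*⊗eᵢ* and let γ̂(z) = v₀ + z v₁ + … + zⁿ vₙ be a polynomial curve with v₀ = e₃ + ie₄ and (γ̂(z), γ̂(z)) = 0 for all z, and suppose v₁,…,v_{n-1} ∈ Span{e₃, e₄}. Then there exist μ₁,…,μ_{n-1} ∈ ℂ with vₖ = μₖ v₀ for k = 1,…,n-1, and (v₀, vₙ) = (vₙ, vₙ) = 0. -/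
noncomputable section

/-- ℂ⁵ -/
abbrev V5 := Fin 5 → ℂ

/-- The standard basis vectors e₀, …, e₄ of ℂ⁵. -/
def e (i : Fin 5) : V5 := Pi.single i 1

/-- The ℂ-bilinear symmetric form -e₀*⊗e₀* + e₁*⊗e₁* + ⋯ + e₄*⊗e₄* on ℂ⁵. -/
def B5 (v w : V5) : ℂ := -(v 0 * w 0) + v 1 * w 1 + v 2 * w 2 + v 3 * w 3 + v 4 * w 4

/-- Coordinatewise complex conjugation: the real structure σ on ℂ⁵ fixing each eᵢ. -/
def σ5 (v : V5) : V5 := fun i => (starRingEnd ℂ) (v i)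

lemma B5_add_left (u v w : V5) : B5 (u + v) w = B5 u w + B5 v w := by
  simp [B5]; ring

lemma B5_zero_left (w : V5) : B5 0 w = 0 := by simp [B5]

lemma B5_smul_left (c : ℂ) (u w : V5) : B5 (c • u) w = c * B5 u w := by
  simp [B5, smul_eq_mul]; ring

lemma B5_symm (u w : V5) : B5 u w = B5 w u := by simp [B5]; ring

lemma B5_smul_right (c : ℂ) (u w : V5) : B5 u (c • w) = c * B5 u w := by
  rw [B5_symm, B5_smul_left, B5_symm]

lemma B5_sum_left {ι : Type*} (s : Finset ι) (f : ι → V5) (w : V5) :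
    B5 (∑ i ∈ s, f i) w = ∑ i ∈ s, B5 (f i) w := by
  induction s using Finset.cons_induction with
  | empty => simp [B5_zero_left]
  | cons a s ha ih => simp [Finset.sum_cons, B5_add_left, ih]

lemma B5_sum_right {ι : Type*} (s : Finset ι) (f : ι → V5) (w : V5) :
    B5 w (∑ i ∈ s, f i) = ∑ i ∈ s, B5 w (f i) := by
  rw [B5_symm, B5_sum_left]; simp_rw [B5_symm]

lemma B5_v0_v0 : B5 (e 3 + Complex.I • e 4) (e 3 + Complex.I • e 4) = 0 := by
  simp [B5, e, Pi.single_apply]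

lemma B5_v0_ab (a b : ℂ) :
    B5 (e 3 + Complex.I • e 4) (a • e 3 + b • e 4) = a + Complex.I * b := by
  simp [B5, e, Pi.single_apply]

lemma mul_v0 (w : V5) (hw : w ∈ Submodule.span ℂ {e 3, e 4})
    (h : B5 (e 3 + Complex.I • e 4) w = 0) :
    ∃ μ : ℂ, w = μ • (e 3 + Complex.I • e 4) := by
  rw [Submodule.mem_span_pair] at hw
  obtain ⟨a, b, rfl⟩ := hw
  have hab : a + Complex.I * b = 0 := by rw [← B5_v0_ab]; exact h
  have hb : b = Complex.I * a := by
    linear_combination -Complex.I * hab + b * Complex.I_mul_I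
  refine ⟨a, ?_⟩
  rw [hb, smul_add, smul_smul]
  ring_nf

/-- If γ̂(z) = v₀ + z v₁ + … + zⁿ vₙ is a polynomial curve in ℂ⁵ with
v₀ = e₃ + ie₄, (γ̂(z),γ̂(z)) = 0 for all z, and v₁,…,v_{n-1} ∈ Span{e₃,e₄},
then each vₖ (1 ≤ k ≤ n-1) is a multiple of v₀, and (v₀,vₙ) = (vₙ,vₙ) = 0. -/
theorem stmt14 (n : ℕ) (hn : 1 ≤ n) (v : ℕ → V5)
    (h0 : v 0 = e 3 + Complex.I • e 4)
    (hiso : ∀ z : ℂ, B5 (∑ k ∈ Finset.range (n + 1), z ^ k • v k)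
      (∑ k ∈ Finset.range (n + 1), z ^ k • v k) = 0)
    (hmid : ∀ k, 1 ≤ k → k ≤ n - 1 → v k ∈ Submodule.span ℂ {e 3, e 4}) :
    (∀ k, 1 ≤ k → k ≤ n - 1 → ∃ μ : ℂ, v k = μ • v 0) ∧
    B5 (v 0) (v n) = 0 ∧ B5 (v n) (v n) = 0 := by
  classical
  set P : Polynomial ℂ := ∑ j ∈ Finset.range (n + 1), ∑ k ∈ Finset.range (n + 1),
      Polynomial.C (B5 (v j) (v k)) * Polynomial.X ^ (j + k) with hPdef
  have heval : ∀ z : ℂ, P.eval z = 0 := by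
    intro z
    have h := hiso z
    rw [B5_sum_left] at h
    simp_rw [B5_sum_right, B5_smul_left, B5_smul_right] at h
    simp only [hPdef, Polynomial.eval_finset_sum, Polynomial.eval_mul, Polynomial.eval_C,
      Polynomial.eval_pow, Polynomial.eval_X]
    rw [← h]
    refine Finset.sum_congr rfl fun j _ => Finset.sum_congr rfl fun k _ => ?_
    ring
  have hP0 : P = 0 := by
    apply Polynomial.funext
    intro z; rw [heval z]; simp
  have hcoeff : ∀ m : ℕ, (∑ j ∈ Finset.range (n + 1), ∑ k ∈ Finset.range (n + 1),
      if m = j + k then B5 (v j) (v k) else 0) = 0 := by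
    intro m
    have h := congrArg (fun p : Polynomial ℂ => p.coeff m) hP0
    simpa [hPdef, Polynomial.finset_sum_coeff, Polynomial.coeff_C_mul,
      Polynomial.coeff_X_pow] using h
  -- key coefficient identity for m ≤ n
  have key : ∀ m : ℕ, m ≤ n → ∑ j ∈ Finset.range (m + 1), B5 (v j) (v (m - j)) = 0 := by
    intro m hm
    have h := hcoeff m
    have e1 : ∀ j ∈ Finset.range (n + 1),
        (∑ k ∈ Finset.range (n + 1), if m = j + k then B5 (v j) (v k) else 0)
          = if j ∈ Finset.range (m + 1) then B5 (v j) (v (m - j)) else 0 := by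
      intro j hj
      by_cases hjm : j ≤ m
      · rw [if_pos (Finset.mem_range.2 (by omega))]
        have hiff : ∀ k : ℕ, (m = j + k) ↔ (k = m - j) := by intro k; omega
        simp_rw [hiff]
        rw [Finset.sum_ite_eq' (Finset.range (n + 1)) (m - j)]
        rw [if_pos (Finset.mem_range.2 (by omega))]
      · rw [if_neg (by simpa [Finset.mem_range] using by omega)]
        refine Finset.sum_eq_zero fun k _ => ?_
        rw [if_neg (by omega)]
    rw [Finset.sum_congr rfl e1, Finset.sum_ite_mem] at h
    rwa [show Finset.range (n + 1) ∩ Finset.range (m + 1) = Finset.range (m + 1) from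
      Finset.inter_eq_right.2 (Finset.range_subset_range.2 (by omega))] at h
  -- B5 (v n) (v n) = 0 from coefficient 2n
  have hnn : B5 (v n) (v n) = 0 := by
    have h := hcoeff (2 * n)
    rw [Finset.sum_eq_single n (fun j hj hjn => Finset.sum_eq_zero fun k hk => by
        rw [if_neg (by simp only [Finset.mem_range] at hj hk; omega)])
      (fun hn' => absurd (Finset.mem_range.2 (by omega)) hn')] at h
    rw [Finset.sum_eq_single n (fun k hk hkn => by
        rw [if_neg (by simp only [Finset.mem_range] at hk; omega)])
      (fun hn' => absurd (Finset.mem_range.2 (by omega)) hn')] at h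
    rwa [if_pos (by omega)] at h
  -- main induction
  have main : ∀ m, 1 ≤ m → m ≤ n →
      B5 (v 0) (v m) = 0 ∧ (m ≤ n - 1 → ∃ μ : ℂ, v m = μ • v 0) := by
    intro m
    induction m using Nat.strong_induction_on with
    | _ m ih =>
      intro hm1 hmn
      obtain ⟨m', rfl⟩ : ∃ m', m = m' + 1 := ⟨m - 1, by omega⟩
      have hkey := key (m' + 1) hmn
      rw [Finset.sum_range_succ, Finset.sum_range_succ'] at hkey
      have hmid0 : ∑ j ∈ Finset.range m', B5 (v (j + 1)) (v (m' + 1 - (j + 1))) = 0 := by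
        refine Finset.sum_eq_zero fun j hj => ?_
        rw [Finset.mem_range] at hj
        obtain ⟨μ, hμ⟩ := (ih (j + 1) (by omega) (by omega) (by omega)).2 (by omega)
        obtain ⟨μ', hμ'⟩ := (ih (m' + 1 - (j + 1)) (by omega) (by omega) (by omega)).2 (by omega)
        rw [hμ, hμ', B5_smul_left, B5_smul_right, h0, B5_v0_v0]
        ring
      rw [hmid0] at hkey
      simp only [Nat.sub_zero, Nat.sub_self, zero_add] at hkey
      have hB : B5 (v 0) (v (m' + 1)) = 0 := by
        have hsymm : B5 (v (m' + 1)) (v 0) = B5 (v 0) (v (m' + 1)) := B5_symm _ _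
        rw [hsymm] at hkey
        linear_combination hkey / 2
      refine ⟨hB, fun hle => ?_⟩
      obtain ⟨μ, hμ⟩ := mul_v0 _ (hmid (m' + 1) (by omega) hle) (by rw [← h0]; exact hB)
      exact ⟨μ, by rw [hμ, h0]⟩
  refine ⟨fun k hk1 hk2 => (main k hk1 (by omega)).2 hk2, (main n hn le_rfl).1, hnn⟩
end
end

section
/- Let (P,g) and (M,h) be Riemannian manifolds and π : P → M a smooth submersion. Then π is conformal (i.e., at each p, dπ restricted to the orthogonal complement of ker dπ is a conformal linear map) if and only if for each p the restriction of dπ to the horizontal space is conformal and for every vertical vector field V and horizontal vector fields X, Y, (L_V g)(X,Y) = v(V) g(X,Y) for a function v(V) depending only on V. -/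
noncomputable section

open Function

set_option linter.unusedSectionVars false

namespace Stmt17Aux
open ContinuousLinearMap


section Helpers
variable {P E F : Type*} [NormedAddCommGroup P] [NormedSpace ℝ P]
  [NormedAddCommGroup E] [NormedSpace ℝ E] [NormedAddCommGroup F] [NormedSpace ℝ F]

theorem fderiv_bilin_apply (A : P → (E →L[ℝ] F →L[ℝ] ℝ)) (X : P → E) (Y : P → F) (p : P)
    (hA : DifferentiableAt ℝ A p) (hX : DifferentiableAt ℝ X p) (hY : DifferentiableAt ℝ Y p)
    (v : P) :
    fderiv ℝ (fun q => A q (X q) (Y q)) p v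
      = fderiv ℝ A p v (X p) (Y p) + A p (fderiv ℝ X p v) (Y p) + A p (X p) (fderiv ℝ Y p v) := by
  have hAX : DifferentiableAt ℝ (fun q => A q (X q)) p := hA.clm_apply hX
  have h1 := fderiv_clm_apply hAX hY
  have h2 := fderiv_clm_apply hA hX
  calc fderiv ℝ (fun q => A q (X q) (Y q)) p v
      = (fderiv ℝ (fun q => A q (X q)) p v) (Y p) + (A p (X p)) (fderiv ℝ Y p v) := by
        rw [show (fun q => A q (X q) (Y q)) = (fun q => (fun r => A r (X r)) q (Y q)) from rfl, h1]
        simp [add_comm]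
    _ = _ := by rw [h2]; simp; ring
end Helpers

section Gram
variable {P M : Type*} [NormedAddCommGroup P] [NormedSpace ℝ P] [FiniteDimensional ℝ P]
    [NormedAddCommGroup M] [NormedSpace ℝ M] [FiniteDimensional ℝ M]

theorem finrank_clm_dual : Module.finrank ℝ (P →L[ℝ] ℝ) = Module.finrank ℝ P := by
  rw [← Subspace.dual_finrank_eq (K := ℝ) (V := P)]
  exact (LinearMap.toContinuousLinearMap (𝕜 := ℝ) (E := P) (F' := ℝ)).symm.finrank_eq

theorem gram_bijective (G : P →L[ℝ] P →L[ℝ] ℝ) (hpos : ∀ x, x ≠ 0 → 0 < G x x) :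
    Function.Bijective (G : P →ₗ[ℝ] P →L[ℝ] ℝ) := by
  have hinj : Function.Injective (G : P →ₗ[ℝ] P →L[ℝ] ℝ) := by
    rw [← LinearMap.ker_eq_bot, LinearMap.ker_eq_bot']
    intro x hx
    by_contra hne
    have h1 := hpos x hne
    have h2 : G x x = 0 := by
      have : (G : P →ₗ[ℝ] P →L[ℝ] ℝ) x = 0 := hx
      simp only [ContinuousLinearMap.coe_coe] at this
      rw [this]; rfl
    linarith
  exact ⟨hinj,
    (LinearMap.injective_iff_surjective_of_finrank_eq_finrank finrank_clm_dual.symm).mp hinj⟩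

/-- the Gram continuous linear equivalence of a positive definite bilinear form -/
def gramEquiv (G : P →L[ℝ] P →L[ℝ] ℝ) (hpos : ∀ x, x ≠ 0 → 0 < G x x) :
    P ≃L[ℝ] (P →L[ℝ] ℝ) :=
  (LinearEquiv.ofBijective _ (gram_bijective G hpos)).toContinuousLinearEquiv

theorem gramEquiv_apply (G : P →L[ℝ] P →L[ℝ] ℝ) (hpos : ∀ x, x ≠ 0 → 0 < G x x) (x : P) :
    gramEquiv G hpos x = G x := rfl

theorem gramEquiv_coe (G : P →L[ℝ] P →L[ℝ] ℝ) (hpos : ∀ x, x ≠ 0 → 0 < G x x) :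
    ((gramEquiv G hpos : P ≃L[ℝ] (P →L[ℝ] ℝ)) : P →L[ℝ] (P →L[ℝ] ℝ)) = G := by
  ext x : 1; rfl

theorem gram_inverse_eq (G : P →L[ℝ] P →L[ℝ] ℝ) (hpos : ∀ x, x ≠ 0 → 0 < G x x) :
    ContinuousLinearMap.inverse G = ((gramEquiv G hpos).symm : (P →L[ℝ] ℝ) →L[ℝ] P) := by
  conv_lhs => rw [← gramEquiv_coe G hpos]
  exact inverse_equiv _

theorem gram_inverse_apply (G : P →L[ℝ] P →L[ℝ] ℝ) (hpos : ∀ x, x ≠ 0 → 0 < G x x)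
    (φ : P →L[ℝ] ℝ) : G (ContinuousLinearMap.inverse G φ) = φ := by
  rw [gram_inverse_eq G hpos]
  conv_lhs => rw [← gramEquiv_apply G hpos]
  exact (gramEquiv G hpos).apply_symm_apply φ

theorem gram_inverse_self (G : P →L[ℝ] P →L[ℝ] ℝ) (hpos : ∀ x, x ≠ 0 → 0 < G x x)
    (x : P) : ContinuousLinearMap.inverse G (G x) = x := by
  rw [gram_inverse_eq G hpos]
  conv_lhs => rw [← gramEquiv_apply G hpos]
  exact (gramEquiv G hpos).symm_apply_apply x

theorem factor_through (D : P →L[ℝ] M) (hD : Surjective D) (φ : P →L[ℝ] ℝ)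
    (hφ : ∀ z, D z = 0 → φ z = 0) : ∃ ξ : M →L[ℝ] ℝ, φ = ξ.comp D := by
  obtain ⟨s, hs⟩ := (D : P →ₗ[ℝ] M).exists_rightInverse_of_surjective
    (LinearMap.range_eq_top.2 hD)
  refine ⟨LinearMap.toContinuousLinearMap ((φ : P →ₗ[ℝ] ℝ).comp s), ?_⟩
  ext z
  have h1 : D (s (D z) - z) = 0 := by
    have := LinearMap.congr_fun hs (D z)
    simp only [LinearMap.comp_apply, LinearMap.id_apply, ContinuousLinearMap.coe_coe] at this
    simp [map_sub, this]
  have h2 := hφ _ h1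
  simp only [map_sub] at h2
  simp only [ContinuousLinearMap.comp_apply, LinearMap.coe_toContinuousLinearMap',
    LinearMap.comp_apply, ContinuousLinearMap.coe_coe]
  linarith

theorem decomp (G : P →L[ℝ] P →L[ℝ] ℝ) (hpos : ∀ x, x ≠ 0 → 0 < G x x)
    (D : P →L[ℝ] M) (hD : Surjective D) (z : P) :
    ∃ zv zh : P, z = zv + zh ∧ D zv = 0 ∧ ∀ y, D y = 0 → G zh y = 0 := by
  set E := gramEquiv G hpos with hE
  have key : ∀ ξ : M →L[ℝ] ℝ, ∀ y, G (E.symm (ξ.comp D)) y = ξ (D y) := by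
    intro ξ y
    have : G (E.symm (ξ.comp D)) = ξ.comp D := by
      rw [← gramEquiv_apply G hpos, ← hE, E.apply_symm_apply]
    rw [this]; rfl
  let Λ : (M →L[ℝ] ℝ) →ₗ[ℝ] M :=
    { toFun := fun ξ => D (E.symm (ξ.comp D))
      map_add' := by intro ξ₁ ξ₂; simp [add_comp]
      map_smul' := by intro c ξ; simp [smul_comp] }
  have hΛinj : Function.Injective Λ := by
    rw [← LinearMap.ker_eq_bot, LinearMap.ker_eq_bot']
    intro ξ hξ
    have hw : D (E.symm (ξ.comp D)) = 0 := hξ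
    have hww : G (E.symm (ξ.comp D)) (E.symm (ξ.comp D)) = 0 := by
      rw [key]; simp [hw]
    have hz : E.symm (ξ.comp D) = 0 := by
      by_contra hne; exact absurd hww (ne_of_gt (hpos _ hne))
    have : ξ.comp D = 0 := by
      have := congrArg E hz; simpa using this
    ext m
    obtain ⟨x, rfl⟩ := hD m
    have := ContinuousLinearMap.ext_iff.1 this x
    simpa using this
  have hΛsurj : Function.Surjective Λ := by
    refine (LinearMap.injective_iff_surjective_of_finrank_eq_finrank ?_).mp hΛinj
    rw [finrank_clm_dual]
  obtain ⟨ξ, hξ⟩ := hΛsurj (D z)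
  refine ⟨z - E.symm (ξ.comp D), E.symm (ξ.comp D), by abel, ?_, ?_⟩
  · have : D (E.symm (ξ.comp D)) = D z := hξ
    simp [map_sub, this]
  · intro y hy; rw [key, hy]; simp

end Gram




section Core
variable {P M : Type*} [NormedAddCommGroup P] [NormedSpace ℝ P] [FiniteDimensional ℝ P]
    [NormedAddCommGroup M] [NormedSpace ℝ M] [FiniteDimensional ℝ M]

/-- horizontal extension field of the functional ξ -/
def Wf (g : P → P →L[ℝ] P →L[ℝ] ℝ) (π : P → M) (ξ : M →L[ℝ] ℝ) (q : P) : P :=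
  ContinuousLinearMap.inverse (g q) (ξ.comp (fderiv ℝ π q))

theorem diffAt_div {P : Type*} [NormedAddCommGroup P] [NormedSpace ℝ P]
    (f₁ f₂ : P → ℝ) (p : P) (h1 : DifferentiableAt ℝ f₁ p) (h2 : DifferentiableAt ℝ f₂ p)
    (h0 : f₂ p ≠ 0) : DifferentiableAt ℝ (fun q => f₁ q / f₂ q) p := by
  simp only [div_eq_mul_inv]
  exact h1.mul (h2.inv h0)

set_option maxHeartbeats 1000000 in
theorem core
    (g : P → P →L[ℝ] P →L[ℝ] ℝ) (h : M → M →L[ℝ] M →L[ℝ] ℝ)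
    (hg_smooth : ContDiff ℝ (⊤ : ℕ∞) g) (hh_smooth : ContDiff ℝ (⊤ : ℕ∞) h)
    (hg_sym : ∀ p x y, g p x y = g p y x)
    (hg_pos : ∀ p x, x ≠ 0 → 0 < g p x x)
    (hh_sym : ∀ q x y, h q x y = h q y x)
    (π : P → M) (hπ : ContDiff ℝ (⊤ : ℕ∞) π)
    (hsub : ∀ p : P, Surjective (fderiv ℝ π p))
    (hconf : ∀ p : P, ∃ c : ℝ, 0 < c ∧ ∀ x, (∀ y, fderiv ℝ π p y = 0 → g p x y = 0) →
        ∀ y', (∀ y, fderiv ℝ π p y = 0 → g p y' y = 0) →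
        h (π p) (fderiv ℝ π p x) (fderiv ℝ π p y') = c * g p x y')
    (V : P → P) (hV : ContDiff ℝ (⊤ : ℕ∞) V) (hVvert : ∀ q, fderiv ℝ π q (V q) = 0) (p : P) :
    ∃ lam : ℝ, ∀ x, (∀ y, fderiv ℝ π p y = 0 → g p x y = 0) →
      ∀ y', (∀ y, fderiv ℝ π p y = 0 → g p y' y = 0) →
      fderiv ℝ g p (V p) x y' + g p (fderiv ℝ V p x) y' + g p x (fderiv ℝ V p y')
        = lam * g p x y' := by
  by_cases hE : ∃ e, (∀ y, fderiv ℝ π p y = 0 → g p e y = 0) ∧ e ≠ 0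
  case neg =>
    push_neg at hE
    refine ⟨0, fun x hx y' _ => ?_⟩
    have hx0 : x = 0 := hE x hx
    subst hx0
    simp
  case pos =>
  obtain ⟨e, hehor, hene⟩ := hE
  have hDπ_smooth : ContDiff ℝ (⊤ : ℕ∞) (fderiv ℝ π) := hπ.fderiv_right (by simp)
  have hg_diff : Differentiable ℝ g := hg_smooth.differentiable (by simp)
  -- basic properties of the horizontal extension fields
  have hWdiff : ∀ ξ q, DifferentiableAt ℝ (Wf g π ξ) q := by
    intro ξ q
    have h1 : DifferentiableAt ℝ (fun r => ContinuousLinearMap.inverse (g r)) q := by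
      have h2 := contDiffAt_map_inverse (𝕜 := ℝ) (gramEquiv (g q) (hg_pos q))
        (n := ((⊤ : ℕ∞) : WithTop ℕ∞))
      rw [gramEquiv_coe] at h2
      exact (h2.comp q hg_smooth.contDiffAt).differentiableAt (by simp)
    have h3 : DifferentiableAt ℝ (fun r => ξ.comp (fderiv ℝ π r)) q :=
      (differentiableAt_const ξ).clm_comp ((hDπ_smooth.differentiable (by simp)) q)
    exact h1.clm_apply h3
  have hWg : ∀ ξ q, g q (Wf g π ξ q) = ξ.comp (fderiv ℝ π q) := fun ξ q =>
    gram_inverse_apply (g q) (hg_pos q) _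
  have hWhor : ∀ ξ q y, fderiv ℝ π q y = 0 → g q (Wf g π ξ q) y = 0 := by
    intro ξ q y hy
    rw [ContinuousLinearMap.ext_iff.1 (hWg ξ q) y]
    simp [hy]
  have hWval : ∀ (ξ : M →L[ℝ] ℝ) (x : P), g p x = ξ.comp (fderiv ℝ π p) → Wf g π ξ p = x := by
    intro ξ x hx
    show ContinuousLinearMap.inverse (g p) (ξ.comp (fderiv ℝ π p)) = x
    rw [← hx]
    exact gram_inverse_self (g p) (hg_pos p) x
  obtain ⟨ξe, hξe⟩ := factor_through (fderiv ℝ π p) (hsub p) (g p e) hehor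
  have hwp : Wf g π ξe p = e := hWval _ _ hξe
  -- the conformal factor as a function of the point
  set c : P → ℝ := fun q => h (π q) (fderiv ℝ π q (Wf g π ξe q)) (fderiv ℝ π q (Wf g π ξe q))
    / g q (Wf g π ξe q) (Wf g π ξe q) with hcdef
  have hπM_diffAt : DifferentiableAt ℝ (fun q => h (π q)) p :=
    DifferentiableAt.comp p ((hh_smooth.differentiable (by simp)) (π p))
      ((hπ.differentiable (by simp)) p)
  have hDπw_diffAt : ∀ ξ, DifferentiableAt ℝ (fun q => fderiv ℝ π q (Wf g π ξ q)) p := fun ξ =>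
    ((hDπ_smooth.differentiable (by simp)) p).clm_apply (hWdiff ξ p)
  have hden_diff : ∀ ξ₁ ξ₂, DifferentiableAt ℝ (fun q => g q (Wf g π ξ₁ q) (Wf g π ξ₂ q)) p :=
    fun ξ₁ ξ₂ => ((hg_diff p).clm_apply (hWdiff ξ₁ p)).clm_apply (hWdiff ξ₂ p)
  have hnum_diff : DifferentiableAt ℝ
      (fun q => h (π q) (fderiv ℝ π q (Wf g π ξe q)) (fderiv ℝ π q (Wf g π ξe q))) p :=
    (hπM_diffAt.clm_apply (hDπw_diffAt ξe)).clm_apply (hDπw_diffAt ξe)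
  have hgee : 0 < g p (Wf g π ξe p) (Wf g π ξe p) := by rw [hwp]; exact hg_pos p e hene
  have hc_diff : DifferentiableAt ℝ c p := by
    rw [hcdef]
    exact diffAt_div _ _ p hnum_diff (hden_diff ξe ξe) (ne_of_gt hgee)
  have hU : ∀ᶠ q in nhds p, 0 < g q (Wf g π ξe q) (Wf g π ξe q) :=
    continuousAt_const.eventually_lt (hden_diff ξe ξe).continuousAt hgee
  -- c coincides with the pointwise conformal factor near p
  have hcfac : ∀ᶠ q in nhds p, ∀ x', (∀ y, fderiv ℝ π q y = 0 → g q x' y = 0) →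
      ∀ y'', (∀ y, fderiv ℝ π q y = 0 → g q y'' y = 0) →
      h (π q) (fderiv ℝ π q x') (fderiv ℝ π q y'') = c q * g q x' y'' := by
    filter_upwards [hU] with q hq
    intro x' hx' y'' hy''
    obtain ⟨cq, hcqpos, hcq⟩ := hconf q
    have hw : h (π q) (fderiv ℝ π q (Wf g π ξe q)) (fderiv ℝ π q (Wf g π ξe q))
        = cq * g q (Wf g π ξe q) (Wf g π ξe q) := hcq _ (hWhor ξe q) _ (hWhor ξe q)
    have hcqq : c q = cq := by
      show h (π q) (fderiv ℝ π q (Wf g π ξe q)) (fderiv ℝ π q (Wf g π ξe q))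
        / g q (Wf g π ξe q) (Wf g π ξe q) = cq
      rw [hw]
      exact mul_div_cancel_right₀ cq (ne_of_gt hq)
    rw [hcqq]
    exact hcq _ hx' _ hy''
  obtain ⟨cp, hcppos, hcp⟩ := hconf p
  have hcpe : c p = cp := by
    have hw : h (π p) (fderiv ℝ π p (Wf g π ξe p)) (fderiv ℝ π p (Wf g π ξe p))
        = cp * g p (Wf g π ξe p) (Wf g π ξe p) := hcp _ (hWhor ξe p) _ (hWhor ξe p)
    show h (π p) (fderiv ℝ π p (Wf g π ξe p)) (fderiv ℝ π p (Wf g π ξe p))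
      / g p (Wf g π ξe p) (Wf g π ξe p) = cp
    rw [hw]
    exact mul_div_cancel_right₀ cp (ne_of_gt hgee)
  have hcpos : 0 < c p := by rw [hcpe]; exact hcppos
  -- pointwise conformality for arbitrary first argument (lemma C)
  have hTg : ∀ z y₁, (∀ y', fderiv ℝ π p y' = 0 → g p y₁ y' = 0) →
      h (π p) (fderiv ℝ π p z) (fderiv ℝ π p y₁) = c p * g p z y₁ := by
    intro z y₁ hy₁
    obtain ⟨zv, zh, hzsum, hzv, hzh⟩ := decomp (g p) (hg_pos p) (fderiv ℝ π p) (hsub p) z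
    have h1 : fderiv ℝ π p z = fderiv ℝ π p zh := by rw [hzsum]; simp [hzv]
    have h2 : g p z y₁ = g p zh y₁ := by
      have h3 : g p zv y₁ = 0 := by rw [hg_sym]; exact hy₁ zv hzv
      rw [hzsum]; simp [h3]
    rw [h1, h2, hcpe]
    exact hcp zh hzh y₁ hy₁
  have hTg' : ∀ z x₁, (∀ y', fderiv ℝ π p y' = 0 → g p x₁ y' = 0) →
      h (π p) (fderiv ℝ π p x₁) (fderiv ℝ π p z) = c p * g p x₁ z := by
    intro z x₁ hx₁
    rw [hh_sym, hTg z x₁ hx₁, hg_sym]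
  -- now fix horizontal vectors x, y at p
  refine ⟨-(fderiv ℝ c p (V p)) / c p, ?_⟩
  intro x hx y hy
  obtain ⟨ξx, hξx⟩ := factor_through (fderiv ℝ π p) (hsub p) (g p x) hx
  obtain ⟨ξy, hξy⟩ := factor_through (fderiv ℝ π p) (hsub p) (g p y) hy
  have hwxp : Wf g π ξx p = x := hWval _ _ hξx
  have hwyp : Wf g π ξy p = y := hWval _ _ hξy
  have hvvert : fderiv ℝ π p (V p) = 0 := hVvert p
  -- the local conformality identity and its derivative in the direction V p
  have hloc : (fun q => h (π q) (fderiv ℝ π q (Wf g π ξx q)) (fderiv ℝ π q (Wf g π ξy q)))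
      =ᶠ[nhds p] (fun q => c q * g q (Wf g π ξx q) (Wf g π ξy q)) := by
    filter_upwards [hcfac] with q hq
    exact hq _ (hWhor ξx q) _ (hWhor ξy q)
  have hfeq : fderiv ℝ (fun q => h (π q) (fderiv ℝ π q (Wf g π ξx q))
        (fderiv ℝ π q (Wf g π ξy q))) p (V p)
      = fderiv ℝ (fun q => c q * g q (Wf g π ξx q) (Wf g π ξy q)) p (V p) := by
    rw [hloc.fderiv_eq]
  -- derivative of h ∘ π vanishes in the vertical direction
  have hA0 : fderiv ℝ (fun q => h (π q)) p (V p) = 0 := by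
    have hcomp : fderiv ℝ (h ∘ π) p = (fderiv ℝ h (π p)).comp (fderiv ℝ π p) :=
      fderiv_comp p ((hh_smooth.differentiable (by simp)) (π p)) ((hπ.differentiable (by simp)) p)
    show fderiv ℝ (h ∘ π) p (V p) = 0
    rw [hcomp, ContinuousLinearMap.comp_apply, hvvert]
    simp
  -- derivative of the pushed-forward extension fields
  have hXder : ∀ ξ : M →L[ℝ] ℝ, fderiv ℝ (fun q => fderiv ℝ π q (Wf g π ξ q)) p (V p)
      = fderiv ℝ (fderiv ℝ π) p (V p) (Wf g π ξ p) + fderiv ℝ π p (fderiv ℝ (Wf g π ξ) p (V p)) := by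
    intro ξ
    rw [fderiv_clm_apply ((hDπ_smooth.differentiable (by simp)) p) (hWdiff ξ p)]
    simp only [ContinuousLinearMap.add_apply, ContinuousLinearMap.comp_apply,
      ContinuousLinearMap.flip_apply]
    rw [add_comm]
  -- symmetry of the second derivative of π
  have hsymm : ∀ u u' : P, fderiv ℝ (fderiv ℝ π) p u u' = fderiv ℝ (fderiv ℝ π) p u' u :=
    fun u u' => (hπ.contDiffAt.isSymmSndFDerivAt (by rw [minSmoothness_of_isRCLikeNormedField]; exact WithTop.coe_le_coe.2 (le_top : (2 : ℕ∞) ≤ ⊤))) u u'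
  -- differentiating the verticality of V
  have hDV : ∀ u : P, fderiv ℝ π p (fderiv ℝ V p u) = -(fderiv ℝ (fderiv ℝ π) p u (V p)) := by
    intro u
    have hzero : (fun q => fderiv ℝ π q (V q)) = fun _ => (0 : M) := funext hVvert
    have h0 : fderiv ℝ (fun q => fderiv ℝ π q (V q)) p u = 0 := by rw [hzero]; simp
    rw [fderiv_clm_apply ((hDπ_smooth.differentiable (by simp)) p)
      ((hV.differentiable (by simp)) p)] at h0
    simp only [ContinuousLinearMap.add_apply, ContinuousLinearMap.comp_apply,
      ContinuousLinearMap.flip_apply] at h0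
    linear_combination (norm := module) h0
  -- expansion of the left-hand side
  have LHSeq : fderiv ℝ (fun q => h (π q) (fderiv ℝ π q (Wf g π ξx q))
        (fderiv ℝ π q (Wf g π ξy q))) p (V p)
      = fderiv ℝ (fun q => h (π q)) p (V p) (fderiv ℝ π p (Wf g π ξx p))
          (fderiv ℝ π p (Wf g π ξy p))
        + h (π p) (fderiv ℝ (fun q => fderiv ℝ π q (Wf g π ξx q)) p (V p))
            (fderiv ℝ π p (Wf g π ξy p))
        + h (π p) (fderiv ℝ π p (Wf g π ξx p))
            (fderiv ℝ (fun q => fderiv ℝ π q (Wf g π ξy q)) p (V p)) :=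
    fderiv_bilin_apply (fun q => h (π q)) (fun q => fderiv ℝ π q (Wf g π ξx q))
      (fun q => fderiv ℝ π q (Wf g π ξy q)) p hπM_diffAt (hDπw_diffAt ξx) (hDπw_diffAt ξy) (V p)
  rw [hXder ξx, hXder ξy, hA0, hwxp, hwyp] at LHSeq
  simp only [ContinuousLinearMap.zero_apply, zero_add] at LHSeq
  have e1 : h (π p) (fderiv ℝ (fderiv ℝ π) p (V p) x + fderiv ℝ π p (fderiv ℝ (Wf g π ξx) p (V p)))
        (fderiv ℝ π p y)
      = -(c p * g p (fderiv ℝ V p x) y) + c p * g p (fderiv ℝ (Wf g π ξx) p (V p)) y := by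
    have hs1 : fderiv ℝ (fderiv ℝ π) p (V p) x = -(fderiv ℝ π p (fderiv ℝ V p x)) := by
      rw [hsymm (V p) x, hDV x]; simp
    rw [hs1]
    simp only [map_add, map_neg, ContinuousLinearMap.add_apply, ContinuousLinearMap.neg_apply]
    rw [hTg (fderiv ℝ V p x) y hy, hTg (fderiv ℝ (Wf g π ξx) p (V p)) y hy]
  have e2 : h (π p) (fderiv ℝ π p x)
        (fderiv ℝ (fderiv ℝ π) p (V p) y + fderiv ℝ π p (fderiv ℝ (Wf g π ξy) p (V p)))
      = -(c p * g p x (fderiv ℝ V p y)) + c p * g p x (fderiv ℝ (Wf g π ξy) p (V p)) := by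
    have hs1 : fderiv ℝ (fderiv ℝ π) p (V p) y = -(fderiv ℝ π p (fderiv ℝ V p y)) := by
      rw [hsymm (V p) y, hDV y]; simp
    rw [hs1]
    simp only [map_add, map_neg, ContinuousLinearMap.add_apply, ContinuousLinearMap.neg_apply]
    rw [hTg' (fderiv ℝ V p y) x hx, hTg' (fderiv ℝ (Wf g π ξy) p (V p)) x hx]
  rw [e1, e2] at LHSeq
  -- expansion of the right-hand side
  have Geq := fderiv_bilin_apply g (Wf g π ξx) (Wf g π ξy) p (hg_diff p)
    (hWdiff ξx p) (hWdiff ξy p) (V p)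
  rw [hwxp, hwyp] at Geq
  have RHSeq : fderiv ℝ (fun q => c q * g q (Wf g π ξx q) (Wf g π ξy q)) p (V p)
      = fderiv ℝ c p (V p) * g p x y
        + c p * fderiv ℝ (fun q => g q (Wf g π ξx q) (Wf g π ξy q)) p (V p) := by
    rw [fderiv_fun_mul hc_diff (hden_diff ξx ξy)]
    simp only [ContinuousLinearMap.add_apply, ContinuousLinearMap.smul_apply, smul_eq_mul]
    rw [hwxp, hwyp]
    ring
  rw [LHSeq, RHSeq, Geq] at hfeq
  -- final algebra
  rw [div_mul_eq_mul_div, eq_div_iff (ne_of_gt hcpos)]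
  linear_combination (-1 : ℝ) * hfeq

end Core


end Stmt17Aux

set_option maxHeartbeats 1000000 in
/-- A submersion π : P → M between Riemannian manifolds (formalized locally, on
finite-dimensional real vector spaces P, M equipped with smoothly varying
Riemannian metrics g and h) is conformal — i.e. at each p the differential dπₚ,
restricted to the g-orthogonal complement of its kernel, is a conformal linear
map — if and only if at each point the restriction of dπ to the horizontal
space is conformal and for every smooth vertical vector field V there is a
function v(V), depending only on V, such that (L_V g)(X,Y) = v(V)·g(X,Y) for
all smooth horizontal vector fields X, Y.  Here L_V g is the Lie derivative of
the metric, (L_V g)(X,Y) = V·(g(X,Y)) - g([V,X],Y) - g(X,[V,Y]). -/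
theorem stmt17
    {P M : Type*} [NormedAddCommGroup P] [NormedSpace ℝ P] [FiniteDimensional ℝ P]
    [NormedAddCommGroup M] [NormedSpace ℝ M] [FiniteDimensional ℝ M]
    (g : P → P →L[ℝ] P →L[ℝ] ℝ) (h : M → M →L[ℝ] M →L[ℝ] ℝ)
    (hg_smooth : ContDiff ℝ (⊤ : ℕ∞) g) (hh_smooth : ContDiff ℝ (⊤ : ℕ∞) h)
    (hg_sym : ∀ p x y, g p x y = g p y x)
    (hg_pos : ∀ p x, x ≠ 0 → 0 < g p x x)
    (hh_sym : ∀ q x y, h q x y = h q y x)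
    (hh_pos : ∀ q x, x ≠ 0 → 0 < h q x x)
    (π : P → M) (hπ : ContDiff ℝ (⊤ : ℕ∞) π)
    (hsub : ∀ p : P, Surjective (fderiv ℝ π p)) :
    -- vertical space, horizontal space, Lie bracket of vector fields and
    -- Lie derivative of the metric:
    let Vert : P → Set P := fun p => {x | fderiv ℝ π p x = 0}
    let Hor : P → Set P := fun p => {x | ∀ y ∈ Vert p, g p x y = 0}
    let bracket : (P → P) → (P → P) → P → P := fun X Y p =>
      fderiv ℝ Y p (X p) - fderiv ℝ X p (Y p)
    let lieG : (P → P) → (P → P) → (P → P) → P → ℝ := fun V X Y p =>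
      fderiv ℝ (fun q => g q (X q) (Y q)) p (V p)
        - g p (bracket V X p) (Y p) - g p (X p) (bracket V Y p)
    -- π is conformal:
    ((∀ p : P, ∃ c : ℝ, 0 < c ∧ ∀ x ∈ Hor p, ∀ y ∈ Hor p,
        h (π p) (fderiv ℝ π p x) (fderiv ℝ π p y) = c * g p x y) ↔
      -- iff dπ restricted to the horizontal space is conformal at each point …
      ((∀ p : P, ∃ c : ℝ, 0 < c ∧ ∀ x ∈ Hor p, ∀ y ∈ Hor p,
          h (π p) (fderiv ℝ π p x) (fderiv ℝ π p y) = c * g p x y) ∧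
        -- … and the Lie derivative of g along any vertical field is conformal
        -- on horizontal vectors, with factor depending only on V
        ∀ V : P → P, ContDiff ℝ (⊤ : ℕ∞) V → (∀ p, V p ∈ Vert p) →
          ∃ vf : P → ℝ, ∀ X Y : P → P, ContDiff ℝ (⊤ : ℕ∞) X → ContDiff ℝ (⊤ : ℕ∞) Y →
            (∀ p, X p ∈ Hor p) → (∀ p, Y p ∈ Hor p) →
            ∀ p, lieG V X Y p = vf p * g p (X p) (Y p))) := by
  intro Vert Hor bracket lieG
  constructor
  · intro hconf
    refine ⟨hconf, ?_⟩
    intro V hV hVvert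
    have hconf' : ∀ p : P, ∃ c : ℝ, 0 < c ∧ ∀ x,
        (∀ y, fderiv ℝ π p y = 0 → g p x y = 0) →
        ∀ y', (∀ y, fderiv ℝ π p y = 0 → g p y' y = 0) →
        h (π p) (fderiv ℝ π p x) (fderiv ℝ π p y') = c * g p x y' := by
      intro p
      obtain ⟨c, hc, hcc⟩ := hconf p
      exact ⟨c, hc, fun x hx y hy => hcc x hx y hy⟩
    have hVvert' : ∀ q, fderiv ℝ π q (V q) = 0 := hVvert
    have hmain := fun p => Stmt17Aux.core g h hg_smooth hh_smooth hg_sym hg_pos hh_sym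
      π hπ hsub hconf' V hV hVvert' p
    choose vf hvf using hmain
    refine ⟨vf, ?_⟩
    intro X Y hX hY hXh hYh p
    have hfd : fderiv ℝ (fun q => g q (X q) (Y q)) p (V p)
        = fderiv ℝ g p (V p) (X p) (Y p) + g p (fderiv ℝ X p (V p)) (Y p)
          + g p (X p) (fderiv ℝ Y p (V p)) :=
      Stmt17Aux.fderiv_bilin_apply g X Y p ((hg_smooth.differentiable (by simp)) p)
        ((hX.differentiable (by simp)) p) ((hY.differentiable (by simp)) p) (V p)
    have hkey := hvf p (X p) (hXh p) (Y p) (hYh p)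
    show fderiv ℝ (fun q => g q (X q) (Y q)) p (V p)
        - g p (fderiv ℝ X p (V p) - fderiv ℝ V p (X p)) (Y p)
        - g p (X p) (fderiv ℝ Y p (V p) - fderiv ℝ V p (Y p)) = vf p * g p (X p) (Y p)
    rw [hfd]
    simp only [map_sub, ContinuousLinearMap.sub_apply]
    linarith [hkey]
  · rintro ⟨h1, -⟩
    exact h1
end
end
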